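/- For every positive integer n, ζ(2n) = lim_{q→∞} (π/(2q))^{2n} · Σ_{p=1}^{q} cot^{2n}(pπ/(2q+1)). -/

import Mathlib

/-!
Since `x * cot x → 1` as `x → 0`, the `p`-th term `π / (2q) * cot (pπ / (2q + 1))` tends to `1 / p`,
and since `cot x < 1 / x` on `(0, π / 2)` it is bounded by `3 / (2p)` uniformly in `q`. For an
exponent `m ≥ 2` these bounds are summable, so Tannery's theorem (dominated convergence for
series) lets the limit pass inside the sum.
-/

open Real Filter Finset Topology

theorem tendsto_sum_range_of_dominated_convergence {G : Type*} [NormedAddCommGroup G]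
    [CompleteSpace G] {f : ℕ → ℕ → G} {g : ℕ → G} {bound : ℕ → ℝ} (h_sum : Summable bound)
    (hab : ∀ k, Tendsto (f · k) atTop (𝓝 (g k)))
    (h_bound : ∀ᶠ n in atTop, ∀ k < n, ‖f n k‖ ≤ bound k) :
    Tendsto (fun n ↦ ∑ k ∈ range n, f n k) atTop (𝓝 (∑' k, g k)) := by
  have bound_nonneg (k : ℕ) : 0 ≤ bound k := by
    obtain ⟨n, hn, hkn⟩ := (h_bound.and (eventually_gt_atTop k)).exists
    exact (norm_nonneg _).trans (hn k hkn)
  set F : ℕ → ℕ → G := fun n k ↦ if k < n then f n k else 0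
  have hF : ∀ k, Tendsto (F · k) atTop (𝓝 (g k)) := fun k ↦
    (hab k).congr' <| (eventually_gt_atTop k).mono fun n hkn ↦ (if_pos hkn).symm
  have hF_bound : ∀ᶠ n in atTop, ∀ k, ‖F n k‖ ≤ bound k := h_bound.mono fun n hn k ↦ by
    by_cases hkn : k < n
    · simpa only [F, if_pos hkn] using hn k hkn
    · simpa only [F, if_neg hkn, norm_zero] using bound_nonneg k
  refine (tendsto_tsum_of_dominated_convergence h_sum hF hF_bound).congr fun n ↦ ?_
  rw [tsum_eq_sum (s := range n) fun k hk ↦ if_neg (by simpa using hk)]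
  exact sum_congr rfl fun k hk ↦ if_pos (mem_range.mp hk)

namespace Real

lemma cot_pos_of_pos_of_lt_pi_div_two {x : ℝ} (hx₀ : 0 < x) (hx : x < π / 2) : 0 < cot x := by
  rw [← inv_inv (cot x), cot_inv_eq_tan]
  exact inv_pos.mpr (tan_pos_of_pos_of_lt_pi_div_two hx₀ hx)

lemma cot_lt_inv_of_pos_of_lt_pi_div_two {x : ℝ} (hx₀ : 0 < x) (hx : x < π / 2) :
    cot x < x⁻¹ := by
  rw [← inv_inv (cot x), cot_inv_eq_tan]
  exact inv_strictAnti₀ hx₀ (lt_tan hx₀ hx)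

lemma tendsto_mul_cot_nhdsNE_zero : Tendsto (fun x ↦ x * cot x) (𝓝[≠] 0) (𝓝 1) := by
  have h : Tendsto (fun x ↦ cos x / sinc x) (𝓝 0) (𝓝 (cos 0 / sinc 0)) :=
    (continuous_cos.continuousAt.div continuous_sinc.continuousAt (by simp)).tendsto
  rw [cos_zero, sinc_zero, div_one] at h
  refine (h.mono_left nhdsWithin_le_nhds).congr' (eventually_nhdsWithin_of_forall fun x hx ↦ ?_)
  dsimp only
  rw [sinc_of_ne_zero hx, cot_eq_cos_div_sin, div_div_eq_mul_div]
  ring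

end Real

lemma tendsto_pi_div_mul_cot (p : ℕ) (hp : p ≠ 0) :
    Tendsto (fun q : ℕ ↦ π / (2 * q) * cot (p * π / (2 * q + 1))) atTop (𝓝 (p : ℝ)⁻¹) := by
  set x : ℕ → ℝ := fun q ↦ p * π / (2 * q + 1)
  have hx_pos (q : ℕ) : 0 < x q := by positivity
  have hx : Tendsto x atTop (𝓝[≠] 0) := by
    refine tendsto_nhdsWithin_of_tendsto_nhds_of_eventually_within _ ?_
      (Eventually.of_forall fun q ↦ (hx_pos q).ne')
    refine tendsto_const_nhds.div_atTop (tendsto_atTop_add_const_right _ _ ?_)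
    exact tendsto_natCast_atTop_atTop.const_mul_atTop two_pos
  have hratio : Tendsto (fun q : ℕ ↦ (1 + 1 / (q : ℝ) / 2) * (p : ℝ)⁻¹) atTop (𝓝 (p : ℝ)⁻¹) := by
    simpa using ((tendsto_one_div_atTop_nhds_zero_nat.div_const 2).const_add 1).mul_const
      (p : ℝ)⁻¹
  refine (mul_one ((p : ℝ)⁻¹) ▸ hratio.mul (tendsto_mul_cot_nhdsNE_zero.comp hx)).congr' ?_
  filter_upwards [eventually_ne_atTop 0] with q hq
  simp only [Function.comp_apply, x]
  field_simp

lemma abs_pi_div_mul_cot_le {p q : ℕ} (hp : p ≠ 0) (hpq : p ≤ q) :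
    |π / (2 * q) * cot (p * π / (2 * q + 1))| ≤ 3 / 2 * (p : ℝ)⁻¹ := by
  have hp' : (1 : ℝ) ≤ p := by exact_mod_cast Nat.one_le_iff_ne_zero.mpr hp
  have hpq' : (p : ℝ) ≤ q := by exact_mod_cast hpq
  have hq : (0 : ℝ) < q := by linarith
  set x : ℝ := p * π / (2 * q + 1)
  have hx_pos : 0 < x := by positivity
  have hx_lt : x < π / 2 := by
    rw [div_lt_div_iff₀ (by positivity) two_pos]
    nlinarith [pi_pos]
  rw [abs_of_pos (mul_pos (by positivity) (cot_pos_of_pos_of_lt_pi_div_two hx_pos hx_lt))]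
  calc π / (2 * q) * cot x ≤ π / (2 * q) * x⁻¹ := by
        gcongr
        exact (cot_lt_inv_of_pos_of_lt_pi_div_two hx_pos hx_lt).le
    _ = (2 * q + 1) / (2 * q) * (p : ℝ)⁻¹ := by
        simp only [x]
        field_simp
    _ ≤ 3 / 2 * (p : ℝ)⁻¹ := by
        gcongr ?_ * _
        rw [div_le_iff₀ (by positivity)]
        linarith

theorem tendsto_pi_div_pow_mul_sum_cot_pow {m : ℕ} (hm : 1 < m) :
    Tendsto (fun q : ℕ ↦
        (π / (2 * q)) ^ m * ∑ p ∈ Icc 1 q, cot (p * π / (2 * q + 1)) ^ m)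
      atTop (𝓝 (∑' k : ℕ, 1 / ((k : ℝ) + 1) ^ m)) := by
  have h_sum : Summable fun k : ℕ ↦ (3 / 2 * ((k + 1 : ℕ) : ℝ)⁻¹) ^ m := by
    simpa only [mul_pow, inv_pow, one_div] using
      ((summable_nat_add_iff 1).mpr (summable_one_div_nat_pow.mpr hm)).mul_left ((3 / 2) ^ m)
  have h_tannery := tendsto_sum_range_of_dominated_convergence h_sum
    (fun k ↦ (tendsto_pi_div_mul_cot (k + 1) k.succ_ne_zero).pow m)
    (Eventually.of_forall fun q k hk ↦ by
      rw [norm_pow, norm_eq_abs]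
      exact pow_le_pow_left₀ (abs_nonneg _) (abs_pi_div_mul_cot_le k.succ_ne_zero hk) m)
  convert h_tannery using 2 with q
  · rw [range_eq_Ico, sum_Ico_add' fun p : ℕ ↦ (π / (2 * q) * cot (p * π / (2 * q + 1))) ^ m,
      zero_add, Ico_add_one_right_eq_Icc, mul_sum]
    simp only [mul_pow]
  · push_cast
    simp only [inv_pow, one_div]

theorem zeta_even_cot_limit (n : ℕ) (hn : 0 < n) :
    Tendsto (fun q : ℕ =>
        (π / (2 * q)) ^ (2 * n) * ∑ p ∈ Finset.Icc 1 q, (Real.cot (p * π / (2 * q + 1))) ^ (2 * n))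
      atTop (nhds (∑' k : ℕ, 1 / ((k : ℝ) + 1) ^ (2 * n))) :=
  tendsto_pi_div_pow_mul_sum_cot_pow (by omega)
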